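/- arXiv:1706.07023 — 5 statements merged into one kernel-verified Lean document; each statement's English description precedes it below -/
import Mathlib

section
/- If g is a real Lie algebra and h, k are positive semidefinite symmetric bilinear forms on the dual space g*, viewed as elements of Sym²(g), then h # k is positive semidefinite. -/
open scoped BigOperators

/-- The coordinate form of the `#` operation on `Sym²(g)` (elements of `Sym²(g)` being
recorded by their coefficient matrices `h^{αβ}` in a chosen basis):
`(h#k)^{αβ} = c^α_{εδ} c^β_{γθ} h^{εγ} k^{δθ}`, where `c` are the structure constants. -/
def sharpMatR {ι : Type*} [Fintype ι] (c : ι → ι → ι → ℝ) (h k : ι → ι → ℝ) : ι → ι → ℝ :=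
  fun α β => ∑ ε, ∑ δ, ∑ γ, ∑ θ, c ε δ α * c γ θ β * h ε γ * k δ θ

/-- The quadratic square `h# = (1/2) h # h`. -/
noncomputable def sharpSqR {ι : Type*} [Fintype ι] (c : ι → ι → ι → ℝ) (h : ι → ι → ℝ) : ι → ι → ℝ :=
  fun α β => (1 / 2 : ℝ) * sharpMatR c h h α β

/-- Evaluation of a form `h ∈ Sym²(g)` on a dual vector `ξ ∈ g*` (given by coordinates). -/
def quadR {ι : Type*} [Fintype ι] (h : ι → ι → ℝ) (ξ : ι → ℝ) : ℝ :=
  ∑ α, ∑ β, ξ α * ξ β * h α β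

/-- A coefficient matrix is symmetric. -/
def SymmMatR {ι : Type*} (h : ι → ι → ℝ) : Prop := ∀ α β, h α β = h β α

/-- Positive semidefiniteness of a form on `g*`. -/
def PosSemidefR {ι : Type*} [Fintype ι] (h : ι → ι → ℝ) : Prop := ∀ ξ : ι → ℝ, 0 ≤ quadR h ξ

/-- Positive definiteness of a form on `g*`. -/
def PosDefR {ι : Type*} [Fintype ι] (h : ι → ι → ℝ) : Prop :=
  ∀ ξ : ι → ℝ, ξ ≠ 0 → 0 < quadR h ξ

/-- Structure constants of a Lie algebra relative to a basis. -/
noncomputable def structConst {ι : Type*} [Fintype ι] (L : Type*) [LieRing L] [LieAlgebra ℝ L]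
    (b : Module.Basis ι ℝ L) : ι → ι → ι → ℝ :=
  fun i j k => b.repr ⁅b i, b j⁆ k


/-! A positive semidefinite `k` is a sum of squares `k = ∑ⱼ vⱼ ⊗ vⱼ`. Since `#` is linear in its
second argument and, for `k = v ⊗ v`, `(h # k)(ξ, ξ) = h(η, η)` with `η = ξ([·, v])`, the value
`(h # k)(ξ, ξ)` is a sum of nonnegative terms `h(ηⱼ, ηⱼ)`. -/

section

open Finset Matrix

variable {ι : Type*} [Fintype ι]

/-- For structure constants `c`, the entry `(ε, δ)` is `ξ([e_ε, e_δ])`. -/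
def bracketPairing (c : ι → ι → ι → ℝ) (ξ : ι → ℝ) : Matrix ι ι ℝ :=
  fun ε δ => ∑ α, ξ α * c ε δ α

lemma quadR_sharpMatR (c : ι → ι → ι → ℝ) (h k : ι → ι → ℝ) (ξ : ι → ℝ) :
    quadR (sharpMatR c h k) ξ = ∑ ε, ∑ δ, ∑ γ, ∑ θ,
      bracketPairing c ξ ε δ * bracketPairing c ξ γ θ * h ε γ * k δ θ := by
  simp only [quadR, sharpMatR, bracketPairing, mul_sum, sum_mul, ← Fintype.sum_prod_type']
  refine Fintype.sum_equiv ⟨fun ⟨α, β, ε, δ, γ, θ⟩ => (ε, δ, γ, θ, β, α),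
    fun ⟨ε, δ, γ, θ, β, α⟩ => (α, β, ε, δ, γ, θ), fun _ => rfl, fun _ => rfl⟩ _ _ fun _ => ?_
  dsimp only [Equiv.coe_fn_mk]
  ring

lemma quadR_sharpMatR_mul_self (c : ι → ι → ι → ℝ) (h : ι → ι → ℝ) (v ξ : ι → ℝ) :
    quadR (sharpMatR c h fun δ θ => v δ * v θ) ξ = quadR h (bracketPairing c ξ *ᵥ v) := by
  rw [quadR_sharpMatR]
  simp only [quadR, mulVec, dotProduct, mul_sum, sum_mul]
  refine sum_congr rfl fun ε _ => sum_comm_cycle.symm.trans <|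
    sum_congr rfl fun γ _ => sum_congr rfl fun θ _ => sum_congr rfl fun δ _ => ?_
  ring

lemma quadR_sharpMatR_sum {m : Type*} [Fintype m] (c : ι → ι → ι → ℝ) (h : ι → ι → ℝ)
    (k : m → ι → ι → ℝ) (ξ : ι → ℝ) :
    quadR (sharpMatR c h (∑ j, k j)) ξ = ∑ j, quadR (sharpMatR c h (k j)) ξ := by
  simp only [quadR_sharpMatR, Finset.sum_apply, mul_sum]
  simp only [sum_comm (γ := m)]

lemma PosSemidefR.exists_eq_sum_mul_self {k : ι → ι → ℝ} (kpsd : PosSemidefR k)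
    (ksymm : SymmMatR k) : ∃ (m : ℕ) (v : Fin m → ι → ℝ), k = ∑ j, fun δ θ => v j δ * v j θ := by
  have hk : (Matrix.of k).PosSemidef := by
    refine .of_dotProduct_mulVec_nonneg (funext₂ fun δ θ => ksymm θ δ) fun ξ => ?_
    simpa [quadR, dotProduct, mulVec, mul_sum, mul_comm, mul_left_comm] using kpsd ξ
  obtain ⟨m, v, hv⟩ := posSemidef_iff_eq_sum_vecMulVec.mp hk
  refine ⟨m, v, funext₂ fun δ θ => ?_⟩
  simpa [vecMulVec_apply, Matrix.sum_apply] using congrFun₂ hv δ θ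

end

theorem sharp_posSemidef_general {ι : Type*} [Fintype ι] (L : Type*) [LieRing L] [LieAlgebra ℝ L]
    (b : Module.Basis ι ℝ L) (h k : ι → ι → ℝ)
    (ksymm : SymmMatR k)
    (hpsd : PosSemidefR h) (kpsd : PosSemidefR k) :
    PosSemidefR (sharpMatR (structConst L b) h k) := by
  obtain ⟨m, v, rfl⟩ := kpsd.exists_eq_sum_mul_self ksymm
  intro ξ
  simp_rw [quadR_sharpMatR_sum, quadR_sharpMatR_mul_self]
  exact Finset.sum_nonneg fun j _ => hpsd _

/-- if `g` is a real Lie algebra and `h, k` are positive semidefinite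
symmetric bilinear forms on `g*` (elements of `Sym²(g)`, written in coordinates with
respect to a basis), then `h # k` is positive semidefinite. -/
theorem sharp_posSemidef {ι : Type*} [Fintype ι] (L : Type*) [LieRing L] [LieAlgebra ℝ L]
    (b : Module.Basis ι ℝ L) (h k : ι → ι → ℝ)
    (hsymm : SymmMatR h) (ksymm : SymmMatR k)
    (hpsd : PosSemidefR h) (kpsd : PosSemidefR k) :
    PosSemidefR (sharpMatR (structConst L b) h k) :=
  sharp_posSemidef_general L b h k ksymm hpsd kpsd
end

section
/- If g is a real Lie algebra and h, k ∈ Sym²(g) are positive definite, then the kernel of h # k (viewed as a quadratic form on g*) equals the annihilator of the derived subalgebra [g,g] in g*. -/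
open scoped BigOperators

/-! The operation `#` is the push-forward of `h ⊗ k` along the bracket `g ⊗ g → g`: in matrices,
`h # k = C (h ⊗ k) Cᵀ` with `C` the matrix of the bracket. Hence the quadratic form of `h # k`
at `ξ ∈ g*` is the quadratic form of the Kronecker product `h ⊗ k` at the pulled-back 2-form
`ξ ∘ [·,·]`. Since a Kronecker product of positive definite forms is positive definite, it
vanishes exactly when `ξ` kills all brackets. -/

open Matrix
open scoped Kronecker

theorem Module.Basis.forall_map_lie_eq_zero_iff {ι R L M : Type*} [CommRing R] [LieRing L]
    [LieAlgebra R L] [AddCommGroup M] [Module R M] (b : Module.Basis ι R L) (φ : L →ₗ[R] M) :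
    (∀ x y : L, φ ⁅x, y⁆ = 0) ↔ ∀ i j, φ ⁅b i, b j⁆ = 0 := by
  refine ⟨fun h i j => h _ _, fun h x y => ?_⟩
  have hB : (LieModule.toEnd R L L : L →ₗ[R] Module.End R L).compr₂ φ = 0 :=
    LinearMap.ext_basis b b (by simpa using h)
  simpa using LinearMap.congr_fun₂ hB x y

theorem Matrix.PosDef.dotProduct_mulVec_self_eq_zero_iff {n R : Type*} [Fintype n] [Ring R]
    [PartialOrder R] [StarRing R] [TrivialStar R] {A : Matrix n n R} (hA : A.PosDef) {v : n → R} :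
    v ⬝ᵥ A *ᵥ v = 0 ↔ v = 0 := by
  refine ⟨fun h0 => by_contra fun hv => ?_, fun hv => by simp [hv]⟩
  simpa [star_trivial, h0] using hA.dotProduct_mulVec_pos hv

def bracketMatrix {ι : Type*} (c : ι → ι → ι → ℝ) : Matrix ι (ι × ι) ℝ :=
  Matrix.of fun α p => c p.1 p.2 α

section Coordinates

variable {ι : Type*} [Fintype ι]

theorem quadR_eq_dotProduct_mulVec (h : ι → ι → ℝ) (ξ : ι → ℝ) :
    quadR h ξ = ξ ⬝ᵥ Matrix.of h *ᵥ ξ := by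
  simp only [quadR, dotProduct, mulVec, Finset.mul_sum, of_apply]
  exact Finset.sum_congr rfl fun _ _ => Finset.sum_congr rfl fun _ _ => by ring

theorem posDef_of_symmMatR_of_posDefR {h : ι → ι → ℝ} (hsymm : SymmMatR h) (hpd : PosDefR h) :
    (Matrix.of h).PosDef := by
  refine .of_dotProduct_mulVec_pos (funext₂ fun α β => hsymm β α) fun ξ hξ => ?_
  simpa [quadR_eq_dotProduct_mulVec] using hpd ξ hξ

theorem of_sharpMatR (c : ι → ι → ι → ℝ) (h k : ι → ι → ℝ) :
    Matrix.of (sharpMatR c h k) =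
      bracketMatrix c * (Matrix.of h ⊗ₖ Matrix.of k) * (bracketMatrix c)ᵀ := by
  ext α β
  simp only [mul_apply, Finset.sum_mul]
  rw [Finset.sum_comm]
  simp only [sharpMatR, bracketMatrix, kroneckerMap_apply, of_apply, transpose_apply,
    Fintype.sum_prod_type]
  refine Finset.sum_congr rfl fun _ _ => Finset.sum_congr rfl fun _ _ =>
    Finset.sum_congr rfl fun _ _ => Finset.sum_congr rfl fun _ _ => by ring

theorem quadR_sharpMatR_s3 (c : ι → ι → ι → ℝ) (h k : ι → ι → ℝ) (ξ : ι → ℝ) :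
    quadR (sharpMatR c h k) ξ =
      ((bracketMatrix c)ᵀ *ᵥ ξ) ⬝ᵥ (Matrix.of h ⊗ₖ Matrix.of k) *ᵥ ((bracketMatrix c)ᵀ *ᵥ ξ) := by
  rw [quadR_eq_dotProduct_mulVec, of_sharpMatR, ← mulVec_mulVec, ← mulVec_mulVec,
    dotProduct_mulVec, mulVec_transpose]

theorem transpose_bracketMatrix_mulVec_eq_zero_iff (L : Type*) [LieRing L] [LieAlgebra ℝ L]
    (b : Module.Basis ι ℝ L) (ξ : ι → ℝ) :
    (bracketMatrix (structConst L b))ᵀ *ᵥ ξ = 0 ↔ ∀ x y : L, ∑ γ, b.repr ⁅x, y⁆ γ * ξ γ = 0 := by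
  have hφ (z : L) : (b.constr ℝ ξ : L →ₗ[ℝ] ℝ) z = ∑ γ, b.repr z γ * ξ γ := by simp
  simp_rw [← hφ, b.forall_map_lie_eq_zero_iff, hφ, funext_iff, Prod.forall]
  rfl

end Coordinates

/-- if `h, k ∈ Sym²(g)` are positive definite then the kernel of the
quadratic form `h # k` on `g*` equals the annihilator of the derived subalgebra
`[g,g]` in `g*` (a functional `ξ`, given by its coordinates, annihilates `[g,g]`
iff it vanishes on every bracket `⁅x, y⁆`). -/
theorem sharp_kernel_eq_annihilator {ι : Type*} [Fintype ι] (L : Type*) [LieRing L]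
    [LieAlgebra ℝ L] (b : Module.Basis ι ℝ L) (h k : ι → ι → ℝ)
    (hsymm : SymmMatR h) (ksymm : SymmMatR k)
    (hpd : PosDefR h) (kpd : PosDefR k) :
    ∀ ξ : ι → ℝ,
      quadR (sharpMatR (structConst L b) h k) ξ = 0 ↔
        ∀ x y : L, ∑ γ, (b.repr ⁅x, y⁆ γ) * ξ γ = 0 := by
  intro ξ
  have hpos := (posDef_of_symmMatR_of_posDefR hsymm hpd).kronecker
    (posDef_of_symmMatR_of_posDefR ksymm kpd)
  rw [quadR_sharpMatR_s3, hpos.dotProduct_mulVec_self_eq_zero_iff,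
    transpose_bracketMatrix_mulVec_eq_zero_iff]
end

section
/- Comparison principle for the sharp ODE: if h(t), k(t) are solutions on [0,T) of the ODE ∂_t h = h# (with h# = (1/2) h # h) with positive semidefinite initial conditions satisfying h(0) ≥ k(0) ≥ 0, and both remain positive semidefinite on [0,T), then h(t) ≥ k(t) for all t ∈ [0,T). -/
open scoped BigOperators

/-!
`u = h - k` solves the linear equation `∂ₜ u = A_t u` with `A_t w = ½ (h # w + w # k)`, and `A_t`
maps positive semidefinite forms to positive semidefinite forms, because
`(p # q)(ξ, ξ) = (p ⊗ q)(x, x)` with `x_{εδ} = ξ([e_ε, e_δ])`. A linear equation with such a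
generator preserves the cone: perturb `u` to `v = u + ε e^{(K+1)t} I`, where `I` is the identity
form and `K` bounds `A_t I`. At the first time `s` at which `v(s)(ξ, ξ) = 0` for some `ξ ≠ 0`, the
derivative of `v(ξ, ξ)` would be positive although `s` minimises `v(ξ, ξ)` on `[0, s]`. Letting
`ε → 0` gives `u ≥ 0`.
-/

open Set Filter Topology

def kroneckerDeltaR (ι : Type*) [DecidableEq ι] : ι → ι → ℝ := fun a b => if a = b then 1 else 0

lemma symmMatR_kroneckerDeltaR {ι : Type*} [DecidableEq ι] : SymmMatR (kroneckerDeltaR ι) :=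
  fun a b => by
    rcases eq_or_ne a b with rfl | hab
    · rfl
    · simp [kroneckerDeltaR, hab, hab.symm]

section QuadraticForm

open Matrix

variable {ι : Type*} [Fintype ι]

lemma quadR_add (m m' : ι → ι → ℝ) (ξ : ι → ℝ) :
    quadR (m + m') ξ = quadR m ξ + quadR m' ξ := by
  simp [quadR, mul_add, Finset.sum_add_distrib]

lemma quadR_sub (m m' : ι → ι → ℝ) (ξ : ι → ℝ) :
    quadR (m - m') ξ = quadR m ξ - quadR m' ξ := by
  simp [quadR, mul_sub, Finset.sum_sub_distrib]

lemma quadR_smul (r : ℝ) (m : ι → ι → ℝ) (ξ : ι → ℝ) :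
    quadR (r • m) ξ = r * quadR m ξ := by
  simp [quadR, Finset.mul_sum, mul_left_comm]

lemma quadR_smul_right (m : ι → ι → ℝ) (r : ℝ) (ξ : ι → ℝ) :
    quadR m (r • ξ) = r ^ 2 * quadR m ξ := by
  simp only [quadR, Pi.smul_apply, smul_eq_mul, Finset.mul_sum]
  exact Finset.sum_congr rfl fun _ _ => Finset.sum_congr rfl fun _ _ => by ring

lemma quadR_zero_right (m : ι → ι → ℝ) : quadR m 0 = 0 := by simp [quadR]

lemma quadR_eq_dotProduct (m : ι → ι → ℝ) (ξ : ι → ℝ) :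
    quadR m ξ = star ξ ⬝ᵥ (Matrix.of m *ᵥ ξ) := by
  simp [quadR, dotProduct, mulVec, Finset.mul_sum, mul_comm, mul_left_comm]

lemma posSemidef_of_iff (m : ι → ι → ℝ) :
    (Matrix.of m).PosSemidef ↔ SymmMatR m ∧ PosSemidefR m := by
  rw [posSemidef_iff_dotProduct_mulVec]
  refine and_congr ?_ ?_
  · simp [IsHermitian, ← Matrix.ext_iff, SymmMatR, eq_comm]
  · simp [PosSemidefR, quadR_eq_dotProduct]

lemma PosDefR.posSemidefR {m : ι → ι → ℝ} (hm : PosDefR m) : PosSemidefR m := fun ξ => by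
  rcases eq_or_ne ξ 0 with rfl | hξ
  · rw [quadR_zero_right]
  · exact (hm ξ hξ).le

lemma abs_quadR_le (m : ι → ι → ℝ) (ξ : ι → ℝ) :
    |quadR m ξ| ≤ ‖m‖ * Fintype.card ι * ∑ i, ξ i ^ 2 := by
  have hentry (a b : ι) : |m a b| ≤ ‖m‖ :=
    (norm_le_pi_norm (m a) b).trans (norm_le_pi_norm m a)
  have hcs : (∑ a, |ξ a|) ^ 2 ≤ Fintype.card ι * ∑ i, ξ i ^ 2 := by
    simpa using sq_sum_le_card_mul_sum_sq (s := Finset.univ) (f := fun a => |ξ a|)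
  calc |quadR m ξ| ≤ ∑ a, ∑ b, |ξ a| * |ξ b| * ‖m‖ := by
        refine (Finset.abs_sum_le_sum_abs _ _).trans (Finset.sum_le_sum fun a _ => ?_)
        refine (Finset.abs_sum_le_sum_abs _ _).trans (Finset.sum_le_sum fun b _ => ?_)
        rw [abs_mul, abs_mul]
        exact mul_le_mul_of_nonneg_left (hentry a b) (by positivity)
    _ = ‖m‖ * (∑ a, |ξ a|) ^ 2 := by
        rw [sq, Finset.sum_mul_sum, Finset.mul_sum]
        simp only [Finset.mul_sum]
        exact Finset.sum_congr rfl fun _ _ => Finset.sum_congr rfl fun _ _ => by ring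
    _ ≤ ‖m‖ * Fintype.card ι * ∑ i, ξ i ^ 2 := by
        rw [mul_assoc]
        exact mul_le_mul_of_nonneg_left hcs (norm_nonneg m)

lemma continuous_quadR : Continuous fun p : (ι → ι → ℝ) × (ι → ℝ) => quadR p.1 p.2 := by
  unfold quadR; fun_prop

lemma HasDerivWithinAt.quadR {w : ℝ → ι → ι → ℝ} {w' : ι → ι → ℝ} {s : Set ℝ} {x : ℝ}
    (hw : HasDerivWithinAt w w' s x) (ξ : ι → ℝ) :
    HasDerivWithinAt (fun t => quadR (w t) ξ) (quadR w' ξ) s x := by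
  have hentry (a b : ι) : HasDerivWithinAt (fun t => w t a b) (w' a b) s x :=
    hasDerivWithinAt_pi.mp (hasDerivWithinAt_pi.mp hw a) b
  exact HasDerivWithinAt.fun_sum fun a _ => HasDerivWithinAt.fun_sum fun b _ =>
    (hentry a b).const_mul _

lemma sum_sq_pos_of_ne_zero {ξ : ι → ℝ} (hξ : ξ ≠ 0) : 0 < ∑ i, ξ i ^ 2 := by
  obtain ⟨a, ha⟩ := Function.ne_iff.mp hξ
  exact Finset.sum_pos' (fun _ _ => sq_nonneg _) ⟨a, Finset.mem_univ a, pow_two_pos_of_ne_zero ha⟩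

lemma quadR_kroneckerDeltaR [DecidableEq ι] (ξ : ι → ℝ) :
    quadR (kroneckerDeltaR ι) ξ = ∑ i, ξ i ^ 2 := by
  simp [quadR, kroneckerDeltaR, sq]

end QuadraticForm

section Sharp

open Matrix
open scoped Kronecker

variable {ι : Type*} [Fintype ι] (c : ι → ι → ι → ℝ)

def sharpBilin : (ι → ι → ℝ) →ₗ[ℝ] (ι → ι → ℝ) →ₗ[ℝ] (ι → ι → ℝ) :=
  LinearMap.mk₂ ℝ (sharpMatR c)
    (fun _ _ _ => by ext; simp [sharpMatR, mul_add, add_mul, Finset.sum_add_distrib])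
    (fun _ _ _ => by ext; simp [sharpMatR, Finset.mul_sum, mul_assoc, mul_left_comm])
    (fun _ _ _ => by ext; simp [sharpMatR, mul_add, Finset.sum_add_distrib])
    (fun _ _ _ => by ext; simp [sharpMatR, Finset.mul_sum, mul_left_comm])

@[simp] lemma sharpBilin_apply (p q : ι → ι → ℝ) : sharpBilin c p q = sharpMatR c p q := rfl

noncomputable def sharpLin (p q : ι → ι → ℝ) : (ι → ι → ℝ) →ₗ[ℝ] (ι → ι → ℝ) :=
  (1 / 2 : ℝ) • (sharpBilin c p + (sharpBilin c).flip q)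

lemma sharpLin_apply (p q w : ι → ι → ℝ) :
    sharpLin c p q w = (1 / 2 : ℝ) • (sharpMatR c p w + sharpMatR c w q) := rfl

lemma sharpSqR_sub_sharpSqR (p q : ι → ι → ℝ) :
    sharpSqR c p - sharpSqR c q = sharpLin c p q (p - q) := by
  have hp : sharpSqR c p = (1 / 2 : ℝ) • sharpBilin c p p := rfl
  have hq : sharpSqR c q = (1 / 2 : ℝ) • sharpBilin c q q := rfl
  simp only [hp, hq, sharpLin_apply, ← sharpBilin_apply, map_sub, ← smul_sub]
  abel_nf

/-- The coefficients `ξ([e_ε, e_δ])`, indexed by pairs `(ε, δ)`. -/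
def evalBracket (ξ : ι → ℝ) : ι × ι → ℝ := fun i => ∑ α, ξ α * c i.1 i.2 α

lemma quadR_sharpMatR_eq_kronecker (p q : ι → ι → ℝ) (ξ : ι → ℝ) :
    quadR (sharpMatR c p q) ξ =
      star (evalBracket c ξ) ⬝ᵥ ((Matrix.of p ⊗ₖ Matrix.of q) *ᵥ evalBracket c ξ) := by
  simp only [quadR, sharpMatR, evalBracket, dotProduct, mulVec, kroneckerMap_apply, of_apply,
    Fintype.sum_prod_type, star_trivial, Finset.mul_sum, Finset.sum_mul]
  simp only [← Fintype.sum_prod_type']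
  refine Fintype.sum_equiv
    ⟨fun x => (x.2.2.1, x.2.2.2.1, x.2.2.2.2.1, x.2.2.2.2.2, x.2.1, x.1),
      fun x => (x.2.2.2.2.2, x.2.2.2.2.1, x.1, x.2.1, x.2.2.1, x.2.2.2.1),
      fun _ => rfl, fun _ => rfl⟩ _ _ fun _ => ?_
  simp only [Equiv.coe_fn_mk]
  ring

lemma ContinuousOn.sharpMatR {X : Type*} [TopologicalSpace X] {p q : X → ι → ι → ℝ}
    {s : Set X} (hp : ContinuousOn p s) (hq : ContinuousOn q s) :
    ContinuousOn (fun x => sharpMatR c (p x) (q x)) s := by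
  unfold _root_.sharpMatR; fun_prop

lemma quadR_sharpMatR_nonneg {p q : ι → ι → ℝ} (hp : (Matrix.of p).PosSemidef)
    (hq : (Matrix.of q).PosSemidef) (ξ : ι → ℝ) : 0 ≤ quadR (sharpMatR c p q) ξ := by
  rw [quadR_sharpMatR_eq_kronecker]
  exact (hp.kronecker hq).dotProduct_mulVec_nonneg _

lemma posSemidefR_sharpLin_apply {p q w : ι → ι → ℝ} (hp : (Matrix.of p).PosSemidef)
    (hq : (Matrix.of q).PosSemidef) (hw : (Matrix.of w).PosSemidef) :
    PosSemidefR (sharpLin c p q w) := fun ξ => by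
  rw [sharpLin_apply, quadR_smul, quadR_add]
  have := quadR_sharpMatR_nonneg c hp hw ξ
  have := quadR_sharpMatR_nonneg c hw hq ξ
  positivity

end Sharp

lemma HasDerivWithinAt.nonpos_of_isMinOn_Icc {f : ℝ → ℝ} {f' a s : ℝ}
    (hf : HasDerivWithinAt f f' (Icc a s) s) (hmin : IsMinOn f (Icc a s) s) (has : a < s) :
    f' ≤ 0 := by
  have hdir : a - s ∈ posTangentConeAt (Icc a s) s :=
    sub_mem_posTangentConeAt_of_segment_subset (by rw [segment_symm, segment_eq_Icc has.le])
  have := hmin.localize.hasFDerivWithinAt_nonneg hf.hasFDerivWithinAt hdir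
  rw [ContinuousLinearMap.toSpanSingleton_apply, smul_eq_mul] at this
  nlinarith

section Topology

variable {ι : Type*} [Fintype ι]

lemma isClosed_setOf_posSemidefR : IsClosed {m : ι → ι → ℝ | PosSemidefR m} := by
  simp only [PosSemidefR, ofPred_forall]
  exact isClosed_iInter fun ξ =>
    isClosed_le continuous_const (continuous_quadR.comp (Continuous.prodMk_left ξ))

lemma posDefR_iff_forall_mem_sphere (m : ι → ι → ℝ) :
    PosDefR m ↔ ∀ ξ ∈ Metric.sphere (0 : ι → ℝ) 1, 0 < quadR m ξ := by
  refine ⟨fun hm ξ hξ => hm ξ (ne_zero_of_mem_unit_sphere ⟨ξ, hξ⟩), fun hm ξ hξ => ?_⟩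
  have hξ' : 0 < ‖ξ‖ := norm_pos_iff.mpr hξ
  have := hm (‖ξ‖⁻¹ • ξ) (by simp [norm_smul, hξ'.ne'])
  rw [quadR_smul_right] at this
  exact pos_of_mul_pos_right this (by positivity)

lemma isOpen_setOf_posDefR : IsOpen {m : ι → ι → ℝ | PosDefR m} := by
  refine isOpen_iff_eventually.mpr fun m hm => ?_
  simp only [mem_ofPred_eq, posDefR_iff_forall_mem_sphere] at hm ⊢
  refine (isCompact_sphere 0 1).eventually_forall_of_forall_eventually fun ξ hξ => ?_
  exact continuous_quadR.continuousAt.eventually (lt_mem_nhds (hm ξ hξ))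

lemma exists_first_touch {v : ℝ → ι → ι → ℝ} {a b : ℝ} (hab : a ≤ b)
    (hv : ContinuousOn v (Icc a b)) (ha : PosDefR (v a)) (hb : ¬ PosSemidefR (v b)) :
    ∃ s ∈ Ioc a b, (∀ t ∈ Icc a s, PosSemidefR (v t)) ∧ ∃ ξ ≠ 0, quadR (v s) ξ = 0 := by
  set B := Icc a b ∩ v ⁻¹' {m | PosDefR m}ᶜ
  have hBclosed : IsClosed B :=
    hv.preimage_isClosed_of_isClosed isClosed_Icc isOpen_setOf_posDefR.isClosed_compl
  have hbB : b ∈ B := ⟨⟨hab, le_rfl⟩, fun hpd => hb hpd.posSemidefR⟩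
  have hBbdd : BddBelow B := ⟨a, fun t ht => ht.1.1⟩
  set s := sInf B
  have hsB : s ∈ B := hBclosed.csInf_mem ⟨b, hbB⟩ hBbdd
  have hbefore : ∀ t ∈ Ico a s, PosDefR (v t) := fun t ht => by
    by_contra hnot
    exact (csInf_le hBbdd ⟨⟨ht.1, ht.2.le.trans hsB.1.2⟩, hnot⟩).not_gt ht.2
  have has : a < s := hsB.1.1.lt_of_ne fun h => hsB.2 (h ▸ ha)
  have hs : PosSemidefR (v s) := by
    have hcont : ContinuousWithinAt v (Ico a s) s :=
      (hv s hsB.1).mono (Ico_subset_Icc_self.trans (Icc_subset_Icc le_rfl hsB.1.2))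
    have hcl : v s ∈ closure (v '' Ico a s) :=
      hcont.mem_closure_image (by simp [closure_Ico has.ne, has.le])
    refine closure_minimal ?_ isClosed_setOf_posSemidefR hcl
    rintro _ ⟨t, ht, rfl⟩
    exact (hbefore t ht).posSemidefR
  refine ⟨s, ⟨has, hsB.1.2⟩, fun t ht => ?_, ?_⟩
  · rcases ht.2.lt_or_eq with hts | rfl
    · exact (hbefore t ⟨ht.1, hts⟩).posSemidefR
    · exact hs
  · obtain ⟨ξ, hξ, hle⟩ : ∃ ξ, ξ ≠ 0 ∧ quadR (v s) ξ ≤ 0 := by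
      simpa [PosDefR] using hsB.2
    exact ⟨ξ, hξ, le_antisymm hle (hs ξ)⟩

lemma IsCompact.exists_bound_quadR {w : ℝ → ι → ι → ℝ} {S : Set ℝ} (hS : IsCompact S)
    (hw : ContinuousOn w S) : ∃ K, ∀ t ∈ S, ∀ ξ, |quadR (w t) ξ| ≤ K * ∑ i, ξ i ^ 2 := by
  obtain ⟨M, hM⟩ := hS.exists_bound_of_continuousOn hw
  refine ⟨M * Fintype.card ι, fun t ht ξ => (abs_quadR_le (w t) ξ).trans ?_⟩
  gcongr
  exact hM t ht

end Topology

section Comparison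

variable {ι : Type*} [Fintype ι]

lemma posSemidefR_of_deriv_pos_at_touch {v v' : ℝ → ι → ι → ℝ} {a b : ℝ} (hab : a ≤ b)
    (hv : ∀ t ∈ Icc a b, HasDerivWithinAt v (v' t) (Icc a b) t) (ha : PosDefR (v a))
    (htouch : ∀ s ∈ Ioc a b, (∀ t ∈ Icc a s, PosSemidefR (v t)) →
      ∀ ξ ≠ 0, quadR (v s) ξ = 0 → 0 < quadR (v' s) ξ) :
    PosSemidefR (v b) := by
  by_contra hb
  obtain ⟨s, hs, hpsd, ξ, hξ, hzero⟩ :=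
    exists_first_touch hab (fun t ht => (hv t ht).continuousWithinAt) ha hb
  have hsub : Icc a s ⊆ Icc a b := Icc_subset_Icc le_rfl hs.2
  have hmin : IsMinOn (fun t => quadR (v t) ξ) (Icc a s) s := fun t ht => by
    simpa [hzero] using hpsd t ht ξ
  have hderiv := ((hv s (hsub (right_mem_Icc.mpr hs.1.le))).mono hsub).quadR ξ
  exact (hderiv.nonpos_of_isMinOn_Icc hmin hs.1).not_gt (htouch s hs hpsd ξ hξ hzero)

lemma posSemidefR_add_exp_smul_of_hasDerivWithinAt [DecidableEq ι] {u : ℝ → ι → ι → ℝ}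
    {A : ℝ → (ι → ι → ℝ) →ₗ[ℝ] (ι → ι → ℝ)} {a b K ε : ℝ} (hab : a ≤ b) (hε : 0 < ε)
    (hu : ∀ t ∈ Icc a b, HasDerivWithinAt u (A t (u t)) (Icc a b) t)
    (hsymm : ∀ t ∈ Icc a b, SymmMatR (u t))
    (hA : ∀ t ∈ Icc a b, ∀ w, (Matrix.of w).PosSemidef → PosSemidefR (A t w))
    (hK : ∀ t ∈ Icc a b, ∀ ξ, quadR (A t (kroneckerDeltaR ι)) ξ ≤ K * ∑ i, ξ i ^ 2)
    (ha : PosSemidefR (u a)) :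
    PosSemidefR (u b + (ε * Real.exp ((K + 1) * (b - a))) • kroneckerDeltaR ι) := by
  set δ := kroneckerDeltaR ι
  set E : ℝ → ℝ := fun t => ε * Real.exp ((K + 1) * (t - a))
  have hE (t : ℝ) : HasDerivAt E ((K + 1) * E t) t := by
    have := (((hasDerivAt_id t).sub_const a).const_mul (K + 1)).exp.const_mul ε
    rwa [show ε * (Real.exp ((K + 1) * (id t - a)) * ((K + 1) * 1)) = (K + 1) * E t by
      simp only [E, id]; ring] at this
  have hEpos (t : ℝ) : 0 < E t := by positivity
  refine posSemidefR_of_deriv_pos_at_touch (v := fun t => u t + E t • δ)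
    (v' := fun t => A t (u t) + ((K + 1) * E t) • δ) hab
    (fun t ht => (hu t ht).add ((hE t).smul_const δ).hasDerivWithinAt) (fun ξ hξ => ?_) ?_
  · rw [quadR_add, quadR_smul, quadR_kroneckerDeltaR]
    have := mul_pos (hEpos a) (sum_sq_pos_of_ne_zero hξ)
    linarith [ha ξ]
  · intro s hs hpsd ξ hξ _
    have hsab : s ∈ Icc a b := ⟨hs.1.le, hs.2⟩
    have hvs : (Matrix.of (u s + E s • δ)).PosSemidef := by
      refine (posSemidef_of_iff _).mpr ⟨fun α β => ?_, hpsd s (right_mem_Icc.mpr hs.1.le)⟩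
      simp [hsymm s hsab α β, symmMatR_kroneckerDeltaR α β, δ]
    have hAu : A s (u s) = A s (u s + E s • δ) - E s • A s δ := by simp
    rw [hAu, quadR_add, quadR_sub, quadR_smul, quadR_smul, quadR_kroneckerDeltaR]
    have := hA s hsab _ hvs ξ
    have := mul_le_mul_of_nonneg_left (hK s hsab ξ) (hEpos s).le
    have := mul_pos (hEpos s) (sum_sq_pos_of_ne_zero hξ)
    nlinarith

theorem posSemidefR_of_hasDerivWithinAt_positive [DecidableEq ι] {u : ℝ → ι → ι → ℝ}
    {A : ℝ → (ι → ι → ℝ) →ₗ[ℝ] (ι → ι → ℝ)} {a b : ℝ} (hab : a ≤ b)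
    (hu : ∀ t ∈ Icc a b, HasDerivWithinAt u (A t (u t)) (Icc a b) t)
    (hsymm : ∀ t ∈ Icc a b, SymmMatR (u t))
    (hA : ∀ t ∈ Icc a b, ∀ w, (Matrix.of w).PosSemidef → PosSemidefR (A t w))
    (hA_cont : ContinuousOn (fun t => A t (kroneckerDeltaR ι)) (Icc a b))
    (ha : PosSemidefR (u a)) : PosSemidefR (u b) := by
  obtain ⟨K, hK⟩ := isCompact_Icc.exists_bound_quadR hA_cont
  set C := Real.exp ((K + 1) * (b - a))
  have hlim : Tendsto (fun ε => u b + (ε * C) • kroneckerDeltaR ι) (𝓝[>] 0) (𝓝 (u b)) := by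
    have hcont : Continuous fun ε => u b + (ε * C) • kroneckerDeltaR ι := by fun_prop
    simpa using hcont.continuousWithinAt (s := Ioi 0) (x := 0) |>.tendsto
  refine isClosed_setOf_posSemidefR.mem_of_tendsto hlim (eventually_nhdsWithin_of_forall ?_)
  exact fun ε hε => posSemidefR_add_exp_smul_of_hasDerivWithinAt hab hε hu hsymm hA
    (fun t ht ξ => (abs_le.mp (hK t ht ξ)).2) ha

end Comparison

open Set in
theorem sharp_ODE_comparison_general {ι : Type*} [Fintype ι] (L : Type*) [LieRing L] [LieAlgebra ℝ L]
    (b : Module.Basis ι ℝ L) (T : ℝ) (h k : ℝ → ι → ι → ℝ)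
    (hode : ∀ t ∈ Ico (0 : ℝ) T,
      HasDerivWithinAt h (sharpSqR (structConst L b) (h t)) (Ico (0 : ℝ) T) t)
    (kode : ∀ t ∈ Ico (0 : ℝ) T,
      HasDerivWithinAt k (sharpSqR (structConst L b) (k t)) (Ico (0 : ℝ) T) t)
    (hsymm : ∀ t ∈ Ico (0 : ℝ) T, SymmMatR (h t)) (ksymm : ∀ t ∈ Ico (0 : ℝ) T, SymmMatR (k t))
    (hpsd : ∀ t ∈ Ico (0 : ℝ) T, PosSemidefR (h t)) (kpsd : ∀ t ∈ Ico (0 : ℝ) T, PosSemidefR (k t))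
    (hk0 : PosSemidefR (h 0 - k 0)) :
    ∀ t ∈ Ico (0 : ℝ) T, PosSemidefR (h t - k t) := by
  classical
  intro t₁ ht₁
  set c := structConst L b
  have hsub : Icc 0 t₁ ⊆ Ico 0 T := Icc_subset_Ico_right ht₁.2
  have hcont {f : ℝ → ι → ι → ℝ} (hf : ∀ t ∈ Ico (0 : ℝ) T,
      HasDerivWithinAt f (sharpSqR c (f t)) (Ico (0 : ℝ) T) t) : ContinuousOn f (Icc 0 t₁) :=
    fun t ht => ((hf t (hsub ht)).continuousWithinAt).mono hsub
  have hPSD {f : ℝ → ι → ι → ℝ} (hs : ∀ t ∈ Ico (0 : ℝ) T, SymmMatR (f t))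
      (hp : ∀ t ∈ Ico (0 : ℝ) T, PosSemidefR (f t)) (t : ℝ) (ht : t ∈ Icc 0 t₁) :
      (Matrix.of (f t)).PosSemidef :=
    (posSemidef_of_iff _).mpr ⟨hs t (hsub ht), hp t (hsub ht)⟩
  refine posSemidefR_of_hasDerivWithinAt_positive (u := fun t => h t - k t)
    (A := fun t => sharpLin c (h t) (k t))
    ht₁.1 (fun t ht => ?_) (fun t ht α β => ?_)
    (fun t ht _ hw =>
      posSemidefR_sharpLin_apply c (hPSD hsymm hpsd t ht) (hPSD ksymm kpsd t ht) hw)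
    ?_ hk0
  · rw [← sharpSqR_sub_sharpSqR]
    exact ((hode t (hsub ht)).sub (kode t (hsub ht))).mono hsub
  · simp [hsymm t (hsub ht) α β, ksymm t (hsub ht) α β]
  · simp only [sharpLin_apply]
    exact (((hcont hode).sharpMatR c continuousOn_const).add
      (continuousOn_const.sharpMatR c (hcont kode))).const_smul (1 / 2 : ℝ)

open Set in
/-- comparison principle for the ODE `∂ₜ h = h#`: if `h(t)` and `k(t)`
are solutions on `[0, T)` with positive semidefinite initial data satisfying
`h(0) ≥ k(0) ≥ 0`, and both remain symmetric positive semidefinite on `[0, T)`,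
then `h(t) ≥ k(t)` for all `t ∈ [0, T)`. -/
theorem sharp_ODE_comparison {ι : Type*} [Fintype ι] (L : Type*) [LieRing L] [LieAlgebra ℝ L]
    (b : Module.Basis ι ℝ L) (T : ℝ) (hT : 0 < T) (h k : ℝ → ι → ι → ℝ)
    (hode : ∀ t ∈ Ico (0 : ℝ) T,
      HasDerivWithinAt h (sharpSqR (structConst L b) (h t)) (Ico (0 : ℝ) T) t)
    (kode : ∀ t ∈ Ico (0 : ℝ) T,
      HasDerivWithinAt k (sharpSqR (structConst L b) (k t)) (Ico (0 : ℝ) T) t)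
    (hsymm : ∀ t ∈ Ico (0 : ℝ) T, SymmMatR (h t)) (ksymm : ∀ t ∈ Ico (0 : ℝ) T, SymmMatR (k t))
    (hpsd : ∀ t ∈ Ico (0 : ℝ) T, PosSemidefR (h t)) (kpsd : ∀ t ∈ Ico (0 : ℝ) T, PosSemidefR (k t))
    (hk0 : PosSemidefR (h 0 - k 0)) :
    ∀ t ∈ Ico (0 : ℝ) T, PosSemidefR (h t - k t) :=
  sharp_ODE_comparison_general L b T h k hode kode hsymm ksymm hpsd kpsd hk0
end

section
/- If g is a compact simple real Lie algebra with invariant metric ⟨,⟩ and h is the dual form Σ e_i⊗e_i in an orthonormal basis, then h# = λ h for some λ > 0. -/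
open TensorProduct
open scoped BigOperators

/-- The bracket of a Lie algebra as a bilinear map. -/
noncomputable def bracketBilin (R : Type*) (L : Type*) [CommRing R] [LieRing L]
    [LieAlgebra R L] : L →ₗ[R] L →ₗ[R] L :=
  LinearMap.mk₂ R (fun x y => ⁅x, y⁆) add_lie smul_lie lie_add lie_smul

/-- The Hamilton-type `#` operation on the second tensor power of a Lie algebra,
determined on pure tensors by `(v1 ⊗ v2) # (w1 ⊗ w2) = ⁅v1, w1⁆ ⊗ ⁅v2, w2⁆`. -/
noncomputable def sharpT (R : Type*) (L : Type*) [CommRing R] [LieRing L] [LieAlgebra R L]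
    (a b : L ⊗[R] L) : L ⊗[R] L :=
  TensorProduct.map (TensorProduct.lift (bracketBilin R L)) (TensorProduct.lift (bracketBilin R L))
    (TensorProduct.tensorTensorTensorComm R L L L L (a ⊗ₜ[R] b))

/-!
Expanding one factor in the orthonormal basis turns `h# = ½ ∑ᵢⱼ [eᵢ, eⱼ] ⊗ [eᵢ, eⱼ]` into
`-½ ∑ₖ eₖ ⊗ C eₖ`, where `C = ∑ⱼ (ad eⱼ)²` is the Casimir operator. Through `⟨,⟩` the operator `C`
represents the Killing form, so `C` is symmetric and commutes with `ad`. A real eigenvalue `μ` of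
`C` therefore has an ideal as eigenspace, which is all of `g` by simplicity. Finally
`⟨C x, x⟩ = -∑ⱼ |[eⱼ, x]|²` is negative as soon as `x` is not central, so `μ < 0` and `λ = -μ / 2`.
-/

namespace LieModule

variable {R L M : Type*} [CommRing R] [LieRing L] [LieAlgebra R L]
  [AddCommGroup M] [Module R M] [LieRingModule L M] [LieModule R L M]

def eigenspaceLieSubmodule (f : Module.End R M) (hf : ∀ (x : L) (m : M), f ⁅x, m⁆ = ⁅x, f m⁆)
    (μ : R) : LieSubmodule R L M :=
  { Module.End.eigenspace f μ with
    lie_mem := fun {x m} (hm : m ∈ f.eigenspace μ) => show ⁅x, m⁆ ∈ f.eigenspace μ by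
      rw [Module.End.mem_eigenspace_iff] at hm ⊢
      rw [hf, hm, lie_smul] }

theorem apply_eq_smul_of_hasEigenvalue [IsIrreducible R L M] {f : Module.End R M}
    (hf : ∀ (x : L) (m : M), f ⁅x, m⁆ = ⁅x, f m⁆) {μ : R} (hμ : f.HasEigenvalue μ) (m : M) :
    f m = μ • m := by
  have hne : eigenspaceLieSubmodule f hf μ ≠ ⊥ := by
    intro h
    obtain ⟨v, hv, hv0⟩ := hμ.exists_hasEigenvector
    have hv' : v ∈ eigenspaceLieSubmodule f hf μ := hv
    rw [h, LieSubmodule.mem_bot] at hv'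
    exact hv0 hv'
  have hm : m ∈ eigenspaceLieSubmodule f hf μ := by
    rw [(IsSimpleOrder.eq_bot_or_eq_top _).resolve_left hne]; exact LieSubmodule.mem_top m
  exact Module.End.mem_eigenspace_iff.mp hm

end LieModule

section PosDefForm

variable {V : Type*} [AddCommGroup V] [Module ℝ V] {B : V →ₗ[ℝ] V →ₗ[ℝ] ℝ}

theorem form_self_nonneg (hBpos : ∀ x : V, x ≠ 0 → 0 < B x x) (x : V) : 0 ≤ B x x := by
  rcases eq_or_ne x 0 with rfl | hx
  · simp
  · exact (hBpos x hx).le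

theorem eq_of_forall_form_eq (hBpos : ∀ x : V, x ≠ 0 → 0 < B x x) {u v : V}
    (h : ∀ y, B u y = B v y) : u = v := by
  by_contra huv
  have := hBpos (u - v) (sub_ne_zero.mpr huv)
  rw [LinearMap.map_sub₂, h, sub_self] at this
  exact this.false

theorem LinearMap.exists_hasEigenvalue_of_isSymm_of_posDef [FiniteDimensional ℝ V] [Nontrivial V]
    (hBsymm : ∀ x y : V, B x y = B y x) (hBpos : ∀ x : V, x ≠ 0 → 0 < B x x)
    {T : Module.End ℝ V} (hT : ∀ x y : V, B (T x) y = B x (T y)) :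
    ∃ μ : ℝ, T.HasEigenvalue μ := by
  let core : InnerProductSpace.Core ℝ V :=
    { inner := fun x y => B x y
      conj_inner_symm := fun x y => hBsymm y x
      re_inner_nonneg := form_self_nonneg hBpos
      add_left := fun x y z => by simp
      smul_left := fun x y r => by simp
      definite := fun x hx => by_contra fun h => (hBpos x h).ne' hx }
  let : NormedAddCommGroup V := core.toNormedAddCommGroup
  let : InnerProductSpace ℝ V := InnerProductSpace.ofCore core.toCore
  exact ⟨_, LinearMap.IsSymmetric.hasEigenvalue_iSup_of_finiteDimensional (T := T) hT⟩

end PosDefForm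

theorem Module.Basis.exists_lie_ne_zero {R L ι : Type*} [CommRing R] [LieRing L] [LieAlgebra R L]
    (b : Module.Basis ι R L) (hL : ¬IsLieAbelian L) : ∃ (j : ι) (x : L), ⁅b j, x⁆ ≠ 0 := by
  contrapose! hL
  refine ⟨fun y x => ?_⟩
  have had : LieAlgebra.ad R L y = 0 :=
    b.ext fun j => by rw [LieAlgebra.ad_apply, ← lie_skew, hL, neg_zero, LinearMap.zero_apply]
  rw [← LieAlgebra.ad_apply R, had, LinearMap.zero_apply]

theorem sharpT_sum_tmul_self {R L κ : Type*} [CommRing R] [LieRing L] [LieAlgebra R L]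
    [Fintype κ] (x : κ → L) :
    sharpT R L (∑ i, x i ⊗ₜ[R] x i) (∑ i, x i ⊗ₜ[R] x i) =
      ∑ i, ∑ j, ⁅x i, x j⁆ ⊗ₜ[R] ⁅x i, x j⁆ := by
  simp only [sharpT, sum_tmul, tmul_sum, map_sum, tensorTensorTensorComm_tmul, map_tmul,
    lift.tmul, bracketBilin, LinearMap.mk₂_apply]
  exact Finset.sum_comm

section Orthonormal

variable {ι : Type*} [DecidableEq ι] {L : Type*} [LieRing L] [LieAlgebra ℝ L]
  {B : L →ₗ[ℝ] L →ₗ[ℝ] ℝ} {b : Module.Basis ι ℝ L}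

theorem repr_eq_of_orthonormal (hortho : ∀ i j : ι, B (b i) (b j) = if i = j then 1 else 0)
    (v : L) (i : ι) : b.repr v i = B (b i) v := by
  have : b.coord i = B (b i) :=
    b.ext fun j => by simp [hortho, Finsupp.single_apply, eq_comm]
  exact LinearMap.congr_fun this v

theorem sum_smul_of_orthonormal [Fintype ι]
    (hortho : ∀ i j : ι, B (b i) (b j) = if i = j then 1 else 0)
    (v : L) : ∑ i, B (b i) v • b i = v := by
  simpa [repr_eq_of_orthonormal hortho] using b.sum_repr v

theorem trace_eq_sum_of_orthonormal [Fintype ι]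
    (hortho : ∀ i j : ι, B (b i) (b j) = if i = j then 1 else 0)
    (f : Module.End ℝ L) : LinearMap.trace ℝ L f = ∑ i, B (b i) (f (b i)) := by
  simp [LinearMap.trace_eq_matrix_trace ℝ b, Matrix.trace, LinearMap.toMatrix_apply,
    repr_eq_of_orthonormal hortho]

theorem sum_tmul_self_eq_sum_basis_tmul [Fintype ι]
    (hortho : ∀ i j : ι, B (b i) (b j) = if i = j then 1 else 0) {κ : Type*} [Fintype κ]
    (w : κ → L) : ∑ a, w a ⊗ₜ[ℝ] w a = ∑ k, b k ⊗ₜ[ℝ] ∑ a, B (b k) (w a) • w a := by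
  calc ∑ a, w a ⊗ₜ[ℝ] w a = ∑ a, (∑ k, B (b k) (w a) • b k) ⊗ₜ[ℝ] w a :=
        Finset.sum_congr rfl fun a _ => by rw [sum_smul_of_orthonormal hortho]
    _ = _ := by
        simp only [sum_tmul, tmul_sum, smul_tmul]
        exact Finset.sum_comm

end Orthonormal

section Casimir

variable {ι : Type*} [Fintype ι] {L : Type*} [LieRing L] [LieAlgebra ℝ L]
  {B : L →ₗ[ℝ] L →ₗ[ℝ] ℝ} {b : Module.Basis ι ℝ L}

variable (b) in
/-- When `b` is orthonormal for an invariant form, this is the Casimir operator of the adjoint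
representation. -/
noncomputable def casimir : Module.End ℝ L :=
  ∑ j, LieAlgebra.ad ℝ L (b j) ∘ₗ LieAlgebra.ad ℝ L (b j)

variable (b) in
theorem casimir_apply (x : L) : casimir b x = ∑ j, ⁅b j, ⁅b j, x⁆⁆ := by
  simp [casimir, LinearMap.sum_apply]

theorem form_casimir_apply (hBinv : ∀ x y z : L, B ⁅x, y⁆ z = B x ⁅y, z⁆) (x y : L) :
    B (casimir b x) y = -∑ j, B ⁅b j, x⁆ ⁅b j, y⁆ := by
  simp only [casimir_apply, map_sum, LinearMap.sum_apply, ← Finset.sum_neg_distrib]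
  refine Finset.sum_congr rfl fun j _ => ?_
  rw [← lie_skew, map_neg, LinearMap.neg_apply, hBinv]

variable [DecidableEq ι]

theorem killingForm_eq_form_casimir (hBinv : ∀ x y z : L, B ⁅x, y⁆ z = B x ⁅y, z⁆)
    (hortho : ∀ i j : ι, B (b i) (b j) = if i = j then 1 else 0) (x y : L) :
    killingForm ℝ L x y = B (casimir b x) y := by
  rw [form_casimir_apply hBinv, LieModule.traceForm_apply_apply,
    trace_eq_sum_of_orthonormal hortho, ← Finset.sum_neg_distrib]
  refine Finset.sum_congr rfl fun j _ => ?_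
  rw [LinearMap.comp_apply, LieModule.toEnd_apply_apply, LieModule.toEnd_apply_apply,
    ← hBinv, ← lie_skew y, map_neg]

theorem casimir_isSymm (hBsymm : ∀ x y : L, B x y = B y x)
    (hBinv : ∀ x y z : L, B ⁅x, y⁆ z = B x ⁅y, z⁆)
    (hortho : ∀ i j : ι, B (b i) (b j) = if i = j then 1 else 0) (x y : L) :
    B (casimir b x) y = B x (casimir b y) := by
  rw [← killingForm_eq_form_casimir hBinv hortho, LieModule.traceForm_comm, hBsymm x,
    killingForm_eq_form_casimir hBinv hortho]

theorem casimir_lie (hBpos : ∀ x : L, x ≠ 0 → 0 < B x x)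
    (hBinv : ∀ x y z : L, B ⁅x, y⁆ z = B x ⁅y, z⁆)
    (hortho : ∀ i j : ι, B (b i) (b j) = if i = j then 1 else 0) (z x : L) :
    casimir b ⁅z, x⁆ = ⁅z, casimir b x⁆ := by
  refine eq_of_forall_form_eq hBpos fun y => ?_
  -- `casimir b` represents the Killing form through `B`, and the Killing form is invariant.
  rw [← killingForm_eq_form_casimir hBinv hortho, LieModule.traceForm_apply_lie_apply',
    killingForm_eq_form_casimir hBinv hortho, ← lie_skew z (casimir b x), map_neg,
    LinearMap.neg_apply, hBinv]

theorem exists_neg_casimir_eq_smul [Module.Finite ℝ L] [LieAlgebra.IsSimple ℝ L]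
    (hBsymm : ∀ x y : L, B x y = B y x) (hBpos : ∀ x : L, x ≠ 0 → 0 < B x x)
    (hBinv : ∀ x y z : L, B ⁅x, y⁆ z = B x ⁅y, z⁆)
    (hortho : ∀ i j : ι, B (b i) (b j) = if i = j then 1 else 0) :
    ∃ μ : ℝ, μ < 0 ∧ ∀ x, casimir b x = μ • x := by
  have := LieAlgebra.IsSimple.nontrivial ℝ (L := L)
  obtain ⟨μ, hμ⟩ := LinearMap.exists_hasEigenvalue_of_isSymm_of_posDef hBsymm hBpos
    (casimir_isSymm hBsymm hBinv hortho)
  have hT := LieModule.apply_eq_smul_of_hasEigenvalue (casimir_lie hBpos hBinv hortho) hμ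
  refine ⟨μ, ?_, hT⟩
  obtain ⟨j, x, hjx⟩ := b.exists_lie_ne_zero (LieAlgebra.IsSimple.non_abelian ℝ)
  have hx : x ≠ 0 := by rintro rfl; exact hjx (lie_zero _)
  have hneg : B (casimir b x) x < 0 := by
    rw [form_casimir_apply hBinv, neg_lt_zero]
    exact Finset.sum_pos' (fun i _ => form_self_nonneg hBpos _)
      ⟨j, Finset.mem_univ j, hBpos _ hjx⟩
  rw [hT, map_smul, LinearMap.smul_apply, smul_eq_mul] at hneg
  exact neg_of_mul_neg_left hneg (hBpos x hx).le

theorem sum_form_lie_smul_lie (hBsymm : ∀ x y : L, B x y = B y x)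
    (hBinv : ∀ x y z : L, B ⁅x, y⁆ z = B x ⁅y, z⁆)
    (hortho : ∀ i j : ι, B (b i) (b j) = if i = j then 1 else 0) (v : L) :
    ∑ i, ∑ j, B v ⁅b i, b j⁆ • ⁅b i, b j⁆ = -casimir b v := by
  rw [casimir_apply, Finset.sum_comm, ← Finset.sum_neg_distrib]
  refine Finset.sum_congr rfl fun j _ => ?_
  calc ∑ i, B v ⁅b i, b j⁆ • ⁅b i, b j⁆ = ⁅∑ i, B (b i) ⁅b j, v⁆ • b i, b j⁆ := by
        simp only [sum_lie, smul_lie, hBsymm v, hBinv]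
    _ = -⁅b j, ⁅b j, v⁆⁆ := by rw [sum_smul_of_orthonormal hortho, ← lie_skew]

theorem sum_lie_tmul_lie_eq (hBsymm : ∀ x y : L, B x y = B y x)
    (hBinv : ∀ x y z : L, B ⁅x, y⁆ z = B x ⁅y, z⁆)
    (hortho : ∀ i j : ι, B (b i) (b j) = if i = j then 1 else 0) :
    ∑ i, ∑ j, ⁅b i, b j⁆ ⊗ₜ[ℝ] ⁅b i, b j⁆ = -∑ k, b k ⊗ₜ[ℝ] casimir b (b k) := by
  rw [← Fintype.sum_prod_type', sum_tmul_self_eq_sum_basis_tmul hortho, ← Finset.sum_neg_distrib]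
  refine Finset.sum_congr rfl fun k _ => ?_
  rw [Fintype.sum_prod_type, sum_form_lie_smul_lie hBsymm hBinv hortho, tmul_neg]

end Casimir

/-- if `g` is a compact simple real Lie algebra (a simple real Lie algebra
carrying an ad-invariant positive definite symmetric bilinear form `B`, i.e. an invariant
metric) and `h = Σᵢ eᵢ ⊗ eᵢ` is the dual of the metric in a `B`-orthonormal basis `{eᵢ}`,
then `h# = λ h` for some `λ > 0`, where `h# = (1/2) h # h`. -/
theorem sharpSq_killing_dual_eigen {ι : Type*} [Fintype ι] [DecidableEq ι] (L : Type*)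
    [LieRing L] [LieAlgebra ℝ L] [Module.Finite ℝ L] [LieAlgebra.IsSimple ℝ L]
    (B : L →ₗ[ℝ] L →ₗ[ℝ] ℝ)
    (hBsymm : ∀ x y : L, B x y = B y x)
    (hBpos : ∀ x : L, x ≠ 0 → 0 < B x x)
    (hBinv : ∀ x y z : L, B ⁅x, y⁆ z = B x ⁅y, z⁆)
    (b : Module.Basis ι ℝ L)
    (hortho : ∀ i j : ι, B (b i) (b j) = if i = j then 1 else 0) :
    ∃ lam : ℝ, 0 < lam ∧
      (1 / 2 : ℝ) • sharpT ℝ L (∑ i, b i ⊗ₜ[ℝ] b i) (∑ i, b i ⊗ₜ[ℝ] b i) =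
        lam • ∑ i, b i ⊗ₜ[ℝ] b i := by
  obtain ⟨μ, hμ, hcasimir⟩ := exists_neg_casimir_eq_smul hBsymm hBpos hBinv hortho
  refine ⟨-μ / 2, by linarith, ?_⟩
  simp only [sharpT_sum_tmul_self, sum_lie_tmul_lie_eq hBsymm hBinv hortho, hcasimir, tmul_smul,
    ← Finset.smul_sum, smul_smul, ← neg_smul]
  ring_nf
end

section
/- For the system λ1' = λ2λ3, λ2' = λ1λ3, λ3' = λ1λ2 with positive initial data, the determinant D = λ1λ2λ3 satisfies D' = (λ2λ3)² + (λ1λ3)² + (λ1λ2)² ≥ 3 D^{4/3}, and consequently the solution blows up in finite time. -/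
/-!
Differentiating `D = λ₁λ₂λ₃` along the system gives `D' = Σ (λⱼλₖ)²`, and AM-GM bounds this
below by `3 D^{4/3}`. Comparing with the Riccati-type equation `y' = 3 y^{4/3}`, the function
`D(t)^{-1/3} + t` is nonincreasing, so `t < D(0)^{-1/3}` as long as the solution exists.
-/

open Set

theorem hasDerivWithinAt_mul_mul_of_cyclic {f₁ f₂ f₃ : ℝ → ℝ} {s : Set ℝ} {x : ℝ}
    (h₁ : HasDerivWithinAt f₁ (f₂ x * f₃ x) s x) (h₂ : HasDerivWithinAt f₂ (f₁ x * f₃ x) s x)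
    (h₃ : HasDerivWithinAt f₃ (f₁ x * f₂ x) s x) :
    HasDerivWithinAt (fun y => f₁ y * f₂ y * f₃ y)
      ((f₂ x * f₃ x) ^ 2 + (f₁ x * f₃ x) ^ 2 + (f₁ x * f₂ x) ^ 2) s x :=
  ((h₁.fun_mul h₂).fun_mul h₃).congr_deriv (by ring)

theorem three_mul_rpow_four_div_three_le {a b c : ℝ} (ha : 0 ≤ a) (hb : 0 ≤ b) (hc : 0 ≤ c) :
    3 * (a * b * c) ^ ((4 : ℝ) / 3) ≤ (b * c) ^ 2 + (a * c) ^ 2 + (a * b) ^ 2 := by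
  have amgm := Real.geom_mean_le_arith_mean3_weighted (w₁ := 1 / 3) (w₂ := 1 / 3)
    (w₃ := 1 / 3) (by norm_num) (by norm_num) (by norm_num)
    (sq_nonneg (b * c)) (sq_nonneg (a * c)) (sq_nonneg (a * b)) (by norm_num)
  have hprod : (b * c) ^ 2 * (a * c) ^ 2 * (a * b) ^ 2 = (a * b * c) ^ (4 : ℝ) := by
    rw [show (4 : ℝ) = (4 : ℕ) by norm_num, Real.rpow_natCast]
    ring
  rw [← Real.mul_rpow (by positivity) (by positivity),
    ← Real.mul_rpow (by positivity) (by positivity), hprod,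
    ← Real.rpow_mul (by positivity)] at amgm
  rw [show (4 : ℝ) * (1 / 3) = 4 / 3 by norm_num] at amgm
  linarith

theorem antitoneOn_rpow_neg_add_of_mul_rpow_le_deriv {D D' : ℝ → ℝ} {s : Set ℝ} {c p : ℝ}
    (hs : Convex ℝ s) (hp : 0 ≤ p) (hpos : ∀ t ∈ s, 0 < D t)
    (hD : ∀ t ∈ s, HasDerivWithinAt D (D' t) s t)
    (hgrowth : ∀ t ∈ s, c * D t ^ (1 + p) ≤ D' t) :
    AntitoneOn (fun t => D t ^ (-p) + c * p * t) s := by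
  have hderiv : ∀ t ∈ s, HasDerivWithinAt (fun t => D t ^ (-p) + c * p * t)
      (D' t * -p * D t ^ (-p - 1) + c * p) s t := fun t ht =>
    ((hD t ht).rpow_const (Or.inl (hpos t ht).ne')).add
      ((hasDerivWithinAt_id t s).const_mul (c * p) |>.congr_deriv (mul_one _))
  refine antitoneOn_of_hasDerivWithinAt_nonpos hs
    (fun t ht => (hderiv t ht).continuousWithinAt)
    (fun t ht => (hderiv t (interior_subset ht)).mono interior_subset) fun t ht => ?_
  have ht := interior_subset ht
  have hinv : D t ^ (1 + p) * D t ^ (-p - 1) = 1 := by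
    rw [← Real.rpow_add (hpos t ht), show 1 + p + (-p - 1) = 0 by ring, Real.rpow_zero]
  have hc : c ≤ D' t * D t ^ (-p - 1) := by
    simpa [hinv, mul_assoc] using
      mul_le_mul_of_nonneg_right (hgrowth t ht) (Real.rpow_pos_of_pos (hpos t ht) (-p - 1)).le
  nlinarith

theorem le_rpow_neg_div_of_mul_rpow_le_deriv {D D' : ℝ → ℝ} {T c p : ℝ} (hT : 0 < T)
    (hc : 0 < c) (hp : 0 < p) (hpos : ∀ t ∈ Ico 0 T, 0 < D t)
    (hD : ∀ t ∈ Ico 0 T, HasDerivWithinAt D (D' t) (Ico 0 T) t)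
    (hgrowth : ∀ t ∈ Ico 0 T, c * D t ^ (1 + p) ≤ D' t) :
    T ≤ D 0 ^ (-p) / (c * p) := by
  have hmono := antitoneOn_rpow_neg_add_of_mul_rpow_le_deriv (convex_Ico 0 T) hp.le hpos hD
    hgrowth
  have h0 : (0 : ℝ) ∈ Ico 0 T := ⟨le_rfl, hT⟩
  have hbound : 0 < D 0 ^ (-p) / (c * p) := by
    have := Real.rpow_pos_of_pos (hpos 0 h0) (-p)
    positivity
  refine le_of_forall_lt_imp_le_of_dense fun t htT => ?_
  rcases lt_or_ge t 0 with hneg | hnonneg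
  · linarith
  have ht : t ∈ Ico 0 T := ⟨hnonneg, htT⟩
  have hdecay := hmono h0 ht hnonneg
  have := Real.rpow_pos_of_pos (hpos t ht) (-p)
  rw [le_div_iff₀ (by positivity)]
  simp only [mul_zero, add_zero] at hdecay
  linarith

/-- for the system `λ₁' = λ₂λ₃`, `λ₂' = λ₁λ₃`, `λ₃' = λ₁λ₂` with positive
data on a maximal interval `[0, T)`, the determinant `D = λ₁λ₂λ₃` satisfies
`D' = (λ₂λ₃)² + (λ₁λ₃)² + (λ₁λ₂)² ≥ 3 D^{4/3}`; consequently the solution blows up in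
finite time: `T ≤ D(0)^{-1/3}`. -/
theorem determinant_ODE_blowup (T : ℝ) (hT : 0 < T) (l₁ l₂ l₃ : ℝ → ℝ)
    (hpos : ∀ t ∈ Ico (0 : ℝ) T, 0 < l₁ t ∧ 0 < l₂ t ∧ 0 < l₃ t)
    (h₁ : ∀ t ∈ Ico (0 : ℝ) T, HasDerivWithinAt l₁ (l₂ t * l₃ t) (Ico (0 : ℝ) T) t)
    (h₂ : ∀ t ∈ Ico (0 : ℝ) T, HasDerivWithinAt l₂ (l₁ t * l₃ t) (Ico (0 : ℝ) T) t)
    (h₃ : ∀ t ∈ Ico (0 : ℝ) T, HasDerivWithinAt l₃ (l₁ t * l₂ t) (Ico (0 : ℝ) T) t) :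
    (∀ t ∈ Ico (0 : ℝ) T,
        HasDerivWithinAt (fun s => l₁ s * l₂ s * l₃ s)
          ((l₂ t * l₃ t) ^ 2 + (l₁ t * l₃ t) ^ 2 + (l₁ t * l₂ t) ^ 2) (Ico (0 : ℝ) T) t ∧
        3 * (l₁ t * l₂ t * l₃ t) ^ ((4 : ℝ) / 3) ≤
          (l₂ t * l₃ t) ^ 2 + (l₁ t * l₃ t) ^ 2 + (l₁ t * l₂ t) ^ 2) ∧
      T ≤ (l₁ 0 * l₂ 0 * l₃ 0) ^ (-(1 : ℝ) / 3) := by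
  have hderiv t (ht : t ∈ Ico 0 T) := hasDerivWithinAt_mul_mul_of_cyclic (h₁ t ht) (h₂ t ht)
    (h₃ t ht)
  have hamgm t (ht : t ∈ Ico 0 T) :=
    three_mul_rpow_four_div_three_le (hpos t ht).1.le (hpos t ht).2.1.le (hpos t ht).2.2.le
  refine ⟨fun t ht => ⟨hderiv t ht, hamgm t ht⟩, ?_⟩
  have hlifespan := le_rpow_neg_div_of_mul_rpow_le_deriv (p := 1 / 3) hT three_pos
    (by norm_num) (fun t ht => mul_pos (mul_pos (hpos t ht).1 (hpos t ht).2.1) (hpos t ht).2.2)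
    hderiv fun t ht => by rw [show (1 : ℝ) + 1 / 3 = 4 / 3 by norm_num]; exact hamgm t ht
  convert hlifespan using 1
  norm_num
end
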